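/- arXiv:1911.04220 — 2 statements merged into one kernel-verified Lean document; each statement's English description precedes it below -/
import Mathlib

section
/- Let Θ be a finite set, and let v : Δ(Θ) → ℝ be a concave function on the probability simplex Δ(Θ) ⊂ ℝ^Θ. Let {(b_i, v(b_i))}_{i∈I} be a finite set of points with each b_i a vertex of the simplex (a Dirac distribution), and suppose (b*, v(b*)) is an additional interior point with v(b*) > ∑_ϑ b*(ϑ) v(δ_ϑ). Then for any b ∈ Δ(Θ), the sawtooth value L(b) = c·b + φ(b)·(v(b*) − c·b*), where c(ϑ) = v(δ_ϑ) and φ(b) = min{ b(ϑ)/b*(ϑ) : ϑ ∈ Θ, b*(ϑ) > 0 }, satisfies L(b) ≤ v(b). -/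
open Finset

/-!
Let `φ = ⨅ ϑ, b ϑ / b* ϑ`. Then `φ ≥ 0` and `φ • b* ≤ b`, so `b` is the convex combination of `b*`
with weight `φ` and of the vertices `δ_ϑ` with weights `b ϑ - φ b* ϑ`. Jensen's inequality for the
concave `v` on this combination gives `v b ≥ φ v(b*) + ∑ ϑ, (b ϑ - φ b* ϑ) v(δ_ϑ)`, which is the
sawtooth value rearranged.
-/

/-- The Dirac distribution at `ϑ`, a vertex of the probability simplex. -/
noncomputable def dirac {Θ : Type*} [DecidableEq Θ] (ϑ : Θ) : Θ → ℝ :=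
  fun ϑ' => if ϑ' = ϑ then 1 else 0

section Simplex

variable {Θ : Type*} [Fintype Θ] [DecidableEq Θ]

lemma dirac_mem_stdSimplex (ϑ : Θ) : dirac ϑ ∈ stdSimplex ℝ Θ :=
  ⟨fun _ => by unfold dirac; positivity, by simp [dirac]⟩

lemma sum_smul_dirac (b : Θ → ℝ) : ∑ ϑ, b ϑ • dirac ϑ = b := by
  funext x
  simp [dirac]

lemma ConcaveOn.smul_add_sum_le_of_smul_le {v : (Θ → ℝ) → ℝ}
    (hv : ConcaveOn ℝ (stdSimplex ℝ Θ) v) {b bstar : Θ → ℝ}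
    (hb : b ∈ stdSimplex ℝ Θ) (hbstar : bstar ∈ stdSimplex ℝ Θ)
    {t : ℝ} (ht : 0 ≤ t) (hle : t • bstar ≤ b) :
    t * v bstar + ∑ ϑ, (b ϑ - t * bstar ϑ) * v (dirac ϑ) ≤ v b := by
  let w : Option Θ → ℝ := fun i => i.elim t fun ϑ => b ϑ - t * bstar ϑ
  let p : Option Θ → Θ → ℝ := fun i => i.elim bstar dirac
  have hw_nonneg : ∀ i ∈ (univ : Finset (Option Θ)), 0 ≤ w i := by
    rintro (_ | ϑ) -
    · exact ht
    · exact sub_nonneg.mpr (hle ϑ)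
  have hw_sum : ∑ i, w i = 1 := by
    simp only [Fintype.sum_option, w, Option.elim, sum_sub_distrib, ← mul_sum, hb.2, hbstar.2]
    ring
  have hp_mem : ∀ i ∈ (univ : Finset (Option Θ)), p i ∈ stdSimplex ℝ Θ := by
    rintro (_ | ϑ) -
    · exact hbstar
    · exact dirac_mem_stdSimplex ϑ
  have hp_comb : ∑ i, w i • p i = b := by
    simp only [Fintype.sum_option, w, p, Option.elim, sub_smul, sum_sub_distrib, sum_smul_dirac,
      mul_smul, ← smul_sum]
    abel
  simpa [Fintype.sum_option, w, p, hp_comb] using hv.le_map_sum hw_nonneg hw_sum hp_mem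

end Simplex

theorem sawtooth_lower_bound_general
    {Θ : Type*} [Fintype Θ] [DecidableEq Θ]
    (v : (Θ → ℝ) → ℝ)
    (hv : ConcaveOn ℝ (stdSimplex ℝ Θ) v)
    (bstar : Θ → ℝ) (hbstar : bstar ∈ stdSimplex ℝ Θ) :
    ∀ b ∈ stdSimplex ℝ Θ,
      (∑ ϑ, b ϑ * v (dirac ϑ)) +
        (⨅ ϑ : Θ, b ϑ / bstar ϑ) * (v bstar - ∑ ϑ, bstar ϑ * v (dirac ϑ))
      ≤ v b := by
  intro b hb
  set φ := ⨅ ϑ : Θ, b ϑ / bstar ϑ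
  have hφ_nonneg : 0 ≤ φ := Real.iInf_nonneg fun ϑ => div_nonneg (hb.1 ϑ) (hbstar.1 ϑ)
  have hφ_le : φ • bstar ≤ b := by
    intro ϑ
    rcases (hbstar.1 ϑ).eq_or_lt with h0 | hpos
    · simpa [← h0] using hb.1 ϑ
    · exact (le_div_iff₀ hpos).mp (ciInf_le (Finite.bddBelow_range _) ϑ)
  calc (∑ ϑ, b ϑ * v (dirac ϑ)) + φ * (v bstar - ∑ ϑ, bstar ϑ * v (dirac ϑ))
      = φ * v bstar + ∑ ϑ, (b ϑ - φ * bstar ϑ) * v (dirac ϑ) := by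
        simp only [sub_mul, sum_sub_distrib, mul_assoc, ← mul_sum]
        ring
    _ ≤ v b := hv.smul_add_sum_le_of_smul_le hb hbstar hφ_nonneg hφ_le

/-- Correctness of the sawtooth lower bound (SAWTOOTH-A in NC-PBVI): for a
concave function `v` on the simplex, corner values `c(ϑ) = v(δ_ϑ)` together with
an interior point `b*` satisfying `v(b*) > c·b*` yield, for any belief `b`,
`c·b + φ(b)·(v(b*) − c·b*) ≤ v(b)`, where `φ(b) = min_ϑ b(ϑ)/b*(ϑ)`. -/
theorem sawtooth_lower_bound
    {Θ : Type*} [Fintype Θ] [Nonempty Θ] [DecidableEq Θ]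
    (v : (Θ → ℝ) → ℝ)
    (hv : ConcaveOn ℝ (stdSimplex ℝ Θ) v)
    (bstar : Θ → ℝ) (hbstar : bstar ∈ stdSimplex ℝ Θ)
    (hbstar_int : ∀ ϑ, 0 < bstar ϑ)
    (hlift : (∑ ϑ, bstar ϑ * v (dirac ϑ)) < v bstar) :
    ∀ b ∈ stdSimplex ℝ Θ,
      (∑ ϑ, b ϑ * v (dirac ϑ)) +
        (⨅ ϑ : Θ, b ϑ / bstar ϑ) * (v bstar - ∑ ϑ, bstar ϑ * v (dirac ϑ))
      ≤ v b :=
  sawtooth_lower_bound_general v hv bstar hbstar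
end

section
/- Fenchel-type duality for the one-shot incomplete-information value: let Θ and X, Y be finite sets, u : X × Y × Θ → ℝ, and define the primal value v(b) = max_{α ∈ Δ(X)^Θ} min_{β ∈ Δ(Y)} ∑_{ϑ,x,y} b(ϑ) α_ϑ(x) β(y) u(x,y,ϑ) for b ∈ Δ(Θ), and the dual value w(ζ) = min_{β ∈ Δ(Y)} max_{(x,ϑ) ∈ X×Θ} { ζ(ϑ) + ∑_y β(y) u(x,y,ϑ) } for ζ ∈ ℝ^Θ. Then w(ζ) = max_{b ∈ Δ(Θ)} { v(b) + ∑_ϑ b(ϑ) ζ(ϑ) }; in particular w is the convex conjugate-type transform of the concave function v, and w is convex in ζ while v is concave in b. -/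
open Finset

/-- The probability simplex over a finite type, as a subtype. -/
def Simplex (A : Type*) [Fintype A] : Type _ :=
  {α : A → ℝ // (∀ a, 0 ≤ α a) ∧ ∑ a, α a = 1}

/-- The primal one-shot value of the incomplete-information game:
`v(b) = max_{α ∈ Δ(X)^Θ} min_{β ∈ Δ(Y)} ∑_{ϑ,x,y} b(ϑ) α_ϑ(x) β(y) u(x,y,ϑ)`. -/
noncomputable def primalValue {Θ X Y : Type*} [Fintype Θ] [Fintype X] [Fintype Y]
    (u : X → Y → Θ → ℝ) (b : Θ → ℝ) : ℝ :=
  ⨆ α : {α : Θ → X → ℝ // ∀ ϑ, (∀ x, 0 ≤ α ϑ x) ∧ ∑ x, α ϑ x = 1},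
    ⨅ β : Simplex Y, ∑ ϑ, ∑ x, ∑ y, b ϑ * α.1 ϑ x * β.1 y * u x y ϑ

/-- The dual one-shot value:
`w(ζ) = min_{β ∈ Δ(Y)} max_{(x,ϑ)} { ζ(ϑ) + ∑_y β(y) u(x,y,ϑ) }`. -/
noncomputable def dualValue {Θ X Y : Type*} [Fintype Θ] [Fintype X] [Fintype Y]
    (u : X → Y → Θ → ℝ) (ζ : Θ → ℝ) : ℝ :=
  ⨅ β : Simplex Y, ⨆ p : X × Θ, (ζ p.2 + ∑ y, β.1 y * u p.1 y p.2)

/-!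
Rosenberg's dual game is the matrix game in which the informed player picks a pair `(x, ϑ)` and
receives `ζ ϑ + u x y ϑ`. A mixed strategy `π ∈ Δ(X × Θ)` of that game is the same thing as a
prior `b` (its marginal) together with a behavioural strategy `α` (its disintegration), and
against `β` it pays `b ⬝ᵥ ζ` plus the primal payoff of `(b, α, β)`. Hence `v b + b ⬝ᵥ ζ ≤ w ζ`
for every prior, while the maximiser's part of a saddle point of the dual game (von Neumann's
minimax theorem, via Sion's) yields a prior attaining `w ζ`. Then `w` is convex as a supremum of
affine functions, and `v` is concave because mixing joint laws mixes their marginals linearly.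
-/

open Matrix

section MatrixGame
variable {I J : Type*} [Fintype I] [Fintype J]

theorem exists_isSaddlePointOn_vecMul_dotProduct [Nonempty I] [Nonempty J] (A : Matrix I J ℝ) :
    ∃ x ∈ stdSimplex ℝ I, ∃ y ∈ stdSimplex ℝ J,
      IsSaddlePointOn (stdSimplex ℝ I) (stdSimplex ℝ J) (fun x y => x ᵥ* A ⬝ᵥ y) x y :=
  Sion.exists_isSaddlePointOn .of_subtype (convex_stdSimplex ℝ I) (isCompact_stdSimplex ℝ I)
    (fun _ _ => (Continuous.continuousOn (by fun_prop)).lowerSemicontinuousOn)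
    (fun y _ => (LinearMap.convexOn (((dotProductBilin ℝ ℝ).flip y).comp A.vecMulLinear)
      (convex_stdSimplex ℝ I)).quasiconvexOn)
    (convex_stdSimplex ℝ J) .of_subtype (isCompact_stdSimplex ℝ J)
    (fun _ _ => (Continuous.continuousOn (by fun_prop)).upperSemicontinuousOn)
    (fun x _ => (LinearMap.concaveOn (dotProductBilin ℝ ℝ (x ᵥ* A))
      (convex_stdSimplex ℝ J)).quasiconcaveOn)

variable {w g : I → ℝ} {c : ℝ}

lemma dotProduct_le_of_mem_stdSimplex (hw : w ∈ stdSimplex ℝ I) (h : ∀ i, g i ≤ c) :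
    w ⬝ᵥ g ≤ c :=
  calc w ⬝ᵥ g ≤ ∑ i, w i * c := sum_le_sum fun i _ => mul_le_mul_of_nonneg_left (h i) (hw.1 i)
    _ = c := by rw [← sum_mul, hw.2, one_mul]

lemma dotProduct_le_iSup_of_mem_stdSimplex (hw : w ∈ stdSimplex ℝ I) : g ⬝ᵥ w ≤ ⨆ i, g i :=
  dotProduct_comm w g ▸
    dotProduct_le_of_mem_stdSimplex hw fun i => le_ciSup (Finite.bddAbove_range g) i

lemma abs_dotProduct_le_of_mem_stdSimplex (hw : w ∈ stdSimplex ℝ I) (h : ∀ i, |g i| ≤ c) :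
    |w ⬝ᵥ g| ≤ c := by
  have hneg := dotProduct_le_of_mem_stdSimplex hw (g := -g) fun i => (neg_le_abs (g i)).trans (h i)
  rw [dotProduct_neg] at hneg
  exact abs_le.2
    ⟨by linarith, dotProduct_le_of_mem_stdSimplex hw fun i => (le_abs_self _).trans (h i)⟩

lemma exists_forall_abs_vecMul_dotProduct_le (A : Matrix I J ℝ) :
    ∃ C, ∀ x ∈ stdSimplex ℝ I, ∀ y ∈ stdSimplex ℝ J, |x ᵥ* A ⬝ᵥ y| ≤ C := by
  obtain ⟨C, hC⟩ := (Set.finite_range fun q : I × J => |A q.1 q.2|).bddAbove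
  refine ⟨C, fun x hx y hy => ?_⟩
  rw [dotProduct_comm]
  exact abs_dotProduct_le_of_mem_stdSimplex hy fun j =>
    abs_dotProduct_le_of_mem_stdSimplex hx fun i => hC ⟨(i, j), rfl⟩

end MatrixGame

lemma ConvexOn.ciSup {E ι : Type*} [AddCommGroup E] [Module ℝ E] [Nonempty ι] {s : Set E}
    {f : ι → E → ℝ} (hs : Convex ℝ s) (hf : ∀ i, ConvexOn ℝ s (f i))
    (hbdd : ∀ x ∈ s, BddAbove (Set.range fun i => f i x)) :
    ConvexOn ℝ s fun x => ⨆ i, f i x := by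
  refine ⟨hs, fun x hx y hy a b ha hb hab => ciSup_le fun i => ?_⟩
  calc f i (a • x + b • y) ≤ a • f i x + b • f i y := (hf i).2 hx hy ha hb hab
    _ ≤ a • (⨆ i, f i x) + b • ⨆ i, f i y := by
      gcongr
      exacts [le_ciSup (hbdd x hx) i, le_ciSup (hbdd y hy) i]

instance {A : Type*} [Fintype A] [Nonempty A] : Nonempty (Simplex A) :=
  inferInstanceAs (Nonempty (stdSimplex ℝ A))

section JointLaw
variable {Θ X : Type*} [Fintype X]

abbrev BehaviouralStrategy (Θ X : Type*) [Fintype X] : Type _ :=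
  {α : Θ → X → ℝ // ∀ ϑ, α ϑ ∈ stdSimplex ℝ X}

instance [Nonempty X] : Nonempty (BehaviouralStrategy Θ X) :=
  ⟨⟨fun _ => stdSimplex.barycenter, fun _ => stdSimplex.barycenter.2⟩⟩

def jointLaw (b : Θ → ℝ) (α : Θ → X → ℝ) : X × Θ → ℝ := fun p => b p.2 * α p.2 p.1

def marginal (π : X × Θ → ℝ) : Θ → ℝ := fun ϑ => ∑ x, π (x, ϑ)

variable {b : Θ → ℝ} {α : Θ → X → ℝ} {π : X × Θ → ℝ}

lemma marginal_jointLaw (hα : ∀ ϑ, α ϑ ∈ stdSimplex ℝ X) : marginal (jointLaw b α) = b := by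
  funext ϑ
  simp only [marginal, jointLaw, ← mul_sum, (hα ϑ).2, mul_one]

lemma exists_jointLaw_marginal_eq [Nonempty X] (hπ : 0 ≤ π) :
    ∃ α : BehaviouralStrategy Θ X, jointLaw (marginal π) α.1 = π := by
  classical
  refine ⟨⟨fun ϑ => if marginal π ϑ = 0 then stdSimplex.barycenter
    else fun x => π (x, ϑ) / marginal π ϑ, fun ϑ => ?_⟩, ?_⟩
  · dsimp only
    split_ifs with h
    · exact stdSimplex.barycenter.2
    · exact ⟨fun x => div_nonneg (hπ _) (sum_nonneg fun x _ => hπ _),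
        by rw [← sum_div]; exact div_self h⟩
  · funext ⟨x, ϑ⟩
    simp only [jointLaw]
    split_ifs with h
    · rw [h, zero_mul, eq_comm]
      exact (sum_eq_zero_iff_of_nonneg fun x _ => hπ (x, ϑ)).1 h x (mem_univ x)
    · exact mul_div_cancel₀ _ h

variable [Fintype Θ]

lemma sum_eq_sum_marginal (π : X × Θ → ℝ) : ∑ p, π p = ∑ ϑ, marginal π ϑ :=
  Fintype.sum_prod_type_right π

lemma jointLaw_mem_stdSimplex (hb : b ∈ stdSimplex ℝ Θ) (hα : ∀ ϑ, α ϑ ∈ stdSimplex ℝ X) :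
    jointLaw b α ∈ stdSimplex ℝ (X × Θ) :=
  ⟨fun p => mul_nonneg (hb.1 p.2) ((hα p.2).1 p.1),
    by rw [sum_eq_sum_marginal, marginal_jointLaw hα, hb.2]⟩

lemma marginal_mem_stdSimplex (hπ : π ∈ stdSimplex ℝ (X × Θ)) : marginal π ∈ stdSimplex ℝ Θ :=
  ⟨fun ϑ => sum_nonneg fun x _ => hπ.1 (x, ϑ), by rw [← sum_eq_sum_marginal, hπ.2]⟩

lemma jointLaw_dotProduct (hα : ∀ ϑ, α ϑ ∈ stdSimplex ℝ X) (ζ : Θ → ℝ) :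
    jointLaw b α ⬝ᵥ (fun p => ζ p.2) = b ⬝ᵥ ζ :=
  calc jointLaw b α ⬝ᵥ (fun p => ζ p.2) = ∑ p, jointLaw (b * ζ) α p :=
        sum_congr rfl fun p _ => by simp only [jointLaw, Pi.mul_apply]; ring
    _ = b ⬝ᵥ ζ := by rw [sum_eq_sum_marginal, marginal_jointLaw hα]; rfl

end JointLaw

section Payoff
variable {Θ X Y : Type*}

def typedPayoff (u : X → Y → Θ → ℝ) : Matrix Y (X × Θ) ℝ := of fun y p => u p.1 y p.2

def dualPayoff (u : X → Y → Θ → ℝ) (ζ : Θ → ℝ) : Matrix Y (X × Θ) ℝ :=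
  of fun y p => ζ p.2 + u p.1 y p.2

lemma vecMul_dualPayoff [Fintype Y] {u : X → Y → Θ → ℝ} {ζ : Θ → ℝ} {β : Y → ℝ}
    (hβ : β ∈ stdSimplex ℝ Y) : β ᵥ* dualPayoff u ζ = (fun p => ζ p.2) + β ᵥ* typedPayoff u := by
  funext p
  simp only [vecMul, dotProduct, dualPayoff, typedPayoff, of_apply, mul_add, sum_add_distrib,
    ← sum_mul, hβ.2, one_mul, Pi.add_apply]

end Payoff

section OneShotGame
variable {Θ X Y : Type*} [Fintype Θ] [Fintype X] [Fintype Y]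
  {u : X → Y → Θ → ℝ} {b : Θ → ℝ} {α : Θ → X → ℝ} {β : Y → ℝ} {ζ : Θ → ℝ}

lemma vecMul_dualPayoff_dotProduct_jointLaw (hβ : β ∈ stdSimplex ℝ Y)
    (hα : ∀ ϑ, α ϑ ∈ stdSimplex ℝ X) :
    β ᵥ* dualPayoff u ζ ⬝ᵥ jointLaw b α = b ⬝ᵥ ζ + β ᵥ* typedPayoff u ⬝ᵥ jointLaw b α := by
  rw [vecMul_dualPayoff hβ, add_dotProduct, dotProduct_comm, jointLaw_dotProduct hα]

lemma dualValue_eq (u : X → Y → Θ → ℝ) (ζ : Θ → ℝ) :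
    dualValue u ζ = ⨅ β : Simplex Y, ⨆ p, (β.1 ᵥ* dualPayoff u ζ) p := by
  refine iInf_congr fun β => iSup_congr fun p => ?_
  rw [vecMul_dualPayoff β.2]
  rfl

lemma primalValue_eq (u : X → Y → Θ → ℝ) (b : Θ → ℝ) :
    primalValue u b =
      ⨆ α : BehaviouralStrategy Θ X, ⨅ β : Simplex Y, β.1 ᵥ* typedPayoff u ⬝ᵥ jointLaw b α.1 := by
  refine iSup_congr fun α => iInf_congr fun β => ?_
  rw [dotProduct, Fintype.sum_prod_type_right]
  refine sum_congr rfl fun ϑ _ => sum_congr rfl fun x _ => ?_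
  simp only [vecMul, dotProduct, typedPayoff, jointLaw, of_apply, sum_mul]
  exact sum_congr rfl fun y _ => by ring

lemma bddBelow_range_payoff (u : X → Y → Θ → ℝ) (hb : b ∈ stdSimplex ℝ Θ)
    (α : BehaviouralStrategy Θ X) :
    BddBelow (Set.range fun β : Simplex Y => β.1 ᵥ* typedPayoff u ⬝ᵥ jointLaw b α.1) := by
  obtain ⟨C, hC⟩ := exists_forall_abs_vecMul_dotProduct_le (typedPayoff u)
  exact ⟨-C, Set.forall_mem_range.2 fun β =>
    neg_le_of_abs_le (hC _ β.2 _ (jointLaw_mem_stdSimplex hb α.2))⟩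

lemma bddAbove_range_iInf_payoff [Nonempty Y] (u : X → Y → Θ → ℝ) (hb : b ∈ stdSimplex ℝ Θ) :
    BddAbove (Set.range fun α : BehaviouralStrategy Θ X =>
      ⨅ β : Simplex Y, β.1 ᵥ* typedPayoff u ⬝ᵥ jointLaw b α.1) := by
  obtain ⟨C, hC⟩ := exists_forall_abs_vecMul_dotProduct_le (typedPayoff u)
  obtain ⟨β⟩ : Nonempty (Simplex Y) := inferInstance
  exact ⟨C, Set.forall_mem_range.2 fun α => (ciInf_le (bddBelow_range_payoff u hb α) β).trans
    (le_of_abs_le (hC _ β.2 _ (jointLaw_mem_stdSimplex hb α.2)))⟩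

variable [Nonempty X] [Nonempty Y]

lemma primalValue_add_dotProduct_le_dualValue (hb : b ∈ stdSimplex ℝ Θ) (ζ : Θ → ℝ) :
    primalValue u b + b ⬝ᵥ ζ ≤ dualValue u ζ := by
  rw [dualValue_eq]
  refine le_ciInf fun β => ?_
  rw [← le_sub_iff_add_le, primalValue_eq]
  refine ciSup_le fun α => ?_
  rw [le_sub_iff_add_le]
  calc (⨅ β' : Simplex Y, β'.1 ᵥ* typedPayoff u ⬝ᵥ jointLaw b α.1) + b ⬝ᵥ ζ
      ≤ β.1 ᵥ* typedPayoff u ⬝ᵥ jointLaw b α.1 + b ⬝ᵥ ζ := by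
        gcongr
        exact ciInf_le (bddBelow_range_payoff u hb α) β
    _ = β.1 ᵥ* dualPayoff u ζ ⬝ᵥ jointLaw b α.1 := by
        rw [vecMul_dualPayoff_dotProduct_jointLaw β.2 α.2, add_comm]
    _ ≤ ⨆ p, (β.1 ᵥ* dualPayoff u ζ) p :=
        dotProduct_le_iSup_of_mem_stdSimplex (jointLaw_mem_stdSimplex hb α.2)

lemma exists_dualValue_le_primalValue_add_dotProduct [Nonempty Θ] (u : X → Y → Θ → ℝ) (ζ : Θ → ℝ) :
    ∃ b ∈ stdSimplex ℝ Θ, dualValue u ζ ≤ primalValue u b + b ⬝ᵥ ζ := by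
  classical
  obtain ⟨β₀, hβ₀, π, hπ, hsaddle⟩ := exists_isSaddlePointOn_vecMul_dotProduct (dualPayoff u ζ)
  obtain ⟨α, hα⟩ := exists_jointLaw_marginal_eq hπ.1
  have hvalue : ∀ β ∈ stdSimplex ℝ Y,
      ⨆ p, (β₀ ᵥ* dualPayoff u ζ) p ≤ β ᵥ* dualPayoff u ζ ⬝ᵥ π := fun β hβ =>
    ciSup_le fun p => by
      simpa only [dotProduct_single_one] using hsaddle β hβ _ (single_mem_stdSimplex ℝ p)
  have hbdd : BddBelow (Set.range fun β : Simplex Y => ⨆ p, (β.1 ᵥ* dualPayoff u ζ) p) :=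
    ⟨β₀ ᵥ* dualPayoff u ζ ⬝ᵥ π, Set.forall_mem_range.2 fun β =>
      (hsaddle β.1 β.2 π hπ).trans (dotProduct_le_iSup_of_mem_stdSimplex hπ)⟩
  refine ⟨marginal π, marginal_mem_stdSimplex hπ, ?_⟩
  calc dualValue u ζ ≤ ⨆ p, (β₀ ᵥ* dualPayoff u ζ) p := by
        rw [dualValue_eq]
        exact ciInf_le hbdd ⟨β₀, hβ₀⟩
    _ ≤ (⨅ β : Simplex Y, β.1 ᵥ* typedPayoff u ⬝ᵥ jointLaw (marginal π) α.1)
        + marginal π ⬝ᵥ ζ := by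
        rw [← sub_le_iff_le_add]
        refine le_ciInf fun β => ?_
        rw [sub_le_iff_le_add', ← vecMul_dualPayoff_dotProduct_jointLaw β.2 α.2, hα]
        exact hvalue β.1 β.2
    _ ≤ primalValue u (marginal π) + marginal π ⬝ᵥ ζ := by
        gcongr
        rw [primalValue_eq]
        exact le_ciSup (bddAbove_range_iInf_payoff u (marginal_mem_stdSimplex hπ)) α

theorem dualValue_eq_iSup [Nonempty Θ] (u : X → Y → Θ → ℝ) (ζ : Θ → ℝ) :
    dualValue u ζ = ⨆ b : stdSimplex ℝ Θ, (primalValue u b.1 + b.1 ⬝ᵥ ζ) := by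
  obtain ⟨b, hb, hle⟩ := exists_dualValue_le_primalValue_add_dotProduct u ζ
  have hbdd : BddAbove (Set.range fun b : stdSimplex ℝ Θ => primalValue u b.1 + b.1 ⬝ᵥ ζ) :=
    ⟨dualValue u ζ, Set.forall_mem_range.2 fun b => primalValue_add_dotProduct_le_dualValue b.2 ζ⟩
  exact le_antisymm (hle.trans (le_ciSup hbdd ⟨b, hb⟩))
    (ciSup_le fun b => primalValue_add_dotProduct_le_dualValue b.2 ζ)

theorem convexOn_dualValue [Nonempty Θ] (u : X → Y → Θ → ℝ) :
    ConvexOn ℝ Set.univ (dualValue u) := by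
  rw [show dualValue u = _ from funext (dualValue_eq_iSup u)]
  exact ConvexOn.ciSup convex_univ
    (fun b => (convexOn_const _ convex_univ).add
      (LinearMap.convexOn (dotProductBilin ℝ ℝ b.1) convex_univ))
    (fun ζ _ => ⟨dualValue u ζ, Set.forall_mem_range.2 fun b =>
      primalValue_add_dotProduct_le_dualValue b.2 ζ⟩)

theorem concaveOn_primalValue (u : X → Y → Θ → ℝ) :
    ConcaveOn ℝ (stdSimplex ℝ Θ) (primalValue u) := by
  refine ⟨convex_stdSimplex ℝ Θ, fun b₁ hb₁ b₂ hb₂ s t hs ht hst => ?_⟩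
  set c := s • b₁ + t • b₂
  have hc : c ∈ stdSimplex ℝ Θ := convex_stdSimplex ℝ Θ hb₁ hb₂ hs ht hst
  have key : ∀ α₁ α₂ : BehaviouralStrategy Θ X,
      s * (⨅ β : Simplex Y, β.1 ᵥ* typedPayoff u ⬝ᵥ jointLaw b₁ α₁.1)
        + t * (⨅ β : Simplex Y, β.1 ᵥ* typedPayoff u ⬝ᵥ jointLaw b₂ α₂.1)
        ≤ primalValue u c := by
    intro α₁ α₂
    set π := s • jointLaw b₁ α₁.1 + t • jointLaw b₂ α₂.1
    have hπ : π ∈ stdSimplex ℝ (X × Θ) := convex_stdSimplex ℝ _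
      (jointLaw_mem_stdSimplex hb₁ α₁.2) (jointLaw_mem_stdSimplex hb₂ α₂.2) hs ht hst
    have hmarginal : marginal π = c := by
      funext ϑ
      simp only [π, c, marginal, Pi.add_apply, Pi.smul_apply, smul_eq_mul, sum_add_distrib,
        ← mul_sum]
      rw [← marginal, ← marginal, marginal_jointLaw α₁.2, marginal_jointLaw α₂.2]
    obtain ⟨α, hα⟩ := exists_jointLaw_marginal_eq hπ.1
    rw [hmarginal] at hα
    calc _ ≤ ⨅ β : Simplex Y, β.1 ᵥ* typedPayoff u ⬝ᵥ jointLaw c α.1 := le_ciInf fun β => by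
          rw [hα, dotProduct_add, dotProduct_smul, dotProduct_smul, smul_eq_mul, smul_eq_mul]
          gcongr
          exacts [ciInf_le (bddBelow_range_payoff u hb₁ α₁) β,
            ciInf_le (bddBelow_range_payoff u hb₂ α₂) β]
      _ ≤ primalValue u c := by
          rw [primalValue_eq]
          exact le_ciSup (bddAbove_range_iInf_payoff u hc) α
  rw [primalValue_eq, primalValue_eq, smul_eq_mul, smul_eq_mul, Real.mul_iSup_of_nonneg hs,
    Real.mul_iSup_of_nonneg ht, ← le_sub_iff_add_le]
  refine ciSup_le fun α₁ => ?_
  rw [le_sub_comm]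
  exact ciSup_le fun α₂ => by linarith [key α₁ α₂]

end OneShotGame

/-- Fenchel-type duality for the one-shot incomplete-information value
(the γ = 0 instance of Rosenberg's primal–dual relation used in Sec. 4.2):
`w(ζ) = max_{b ∈ Δ(Θ)} { v(b) + ∑_ϑ b(ϑ) ζ(ϑ) }`; moreover `w` is convex in `ζ`
and `v` is concave in `b`. -/
theorem one_shot_duality
    {Θ X Y : Type*} [Fintype Θ] [Fintype X] [Fintype Y]
    [Nonempty Θ] [Nonempty X] [Nonempty Y]
    (u : X → Y → Θ → ℝ) :
    (∀ ζ : Θ → ℝ, dualValue u ζ =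
        ⨆ b : stdSimplex ℝ Θ, (primalValue u b.1 + ∑ ϑ, b.1 ϑ * ζ ϑ)) ∧
    ConvexOn ℝ Set.univ (dualValue u) ∧
    ConcaveOn ℝ (stdSimplex ℝ Θ) (primalValue u) :=
  ⟨dualValue_eq_iSup u, convexOn_dualValue u, concaveOn_primalValue u⟩
end
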